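/- arXiv:2001.10962 — 6 statements merged into one kernel-verified Lean document; each statement's English description precedes it below -/
import Mathlib

section
/- Let p be an integer not divisible by 3 and d = p/3. The number of integer pairs (l, m) with (l − d)² + m² = d² equals one quarter of the number of integer pairs (x, y) with x² + y² = p². -/
def gmap : Fin 4 → ℤ × ℤ → ℤ × ℤ
  | 0, q => q
  | 1, q => (-q.1, q.2)
  | 2, q => (q.2, q.1)
  | 3, q => (q.2, -q.1)

set_option maxHeartbeats 1000000 in
theorem stmt_5 (p : ℤ) (hp : ¬ (3 ∣ p)) (d : ℝ) (hd : d = (p : ℝ) / 3) :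
    4 * Nat.card {lm : ℤ × ℤ |
        ((lm.1 : ℝ) - d) ^ 2 + (lm.2 : ℝ) ^ 2 = d ^ 2}
      = Nat.card {xy : ℤ × ℤ | xy.1 ^ 2 + xy.2 ^ 2 = p ^ 2} := by
  classical
  have h3 : (p : ZMod 3) ≠ 0 := by
    simpa [ZMod.intCast_zmod_eq_zero_iff_dvd] using hp
  have key : ∀ l m : ℤ, (((l : ℝ) - d) ^ 2 + (m : ℝ) ^ 2 = d ^ 2) ↔
      ((3*l - p) ^ 2 + (3*m) ^ 2 = p ^ 2) := by
    intro l m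
    subst hd
    constructor
    · intro h
      have h9 : ((3*l - p : ℤ) : ℝ) ^ 2 + ((3*m : ℤ) : ℝ) ^ 2 = ((p : ℤ) : ℝ) ^ 2 := by
        push_cast
        linear_combination 9 * h
      exact_mod_cast h9
    · intro h
      have h9 : ((3*l - p : ℤ) : ℝ) ^ 2 + ((3*m : ℤ) : ℝ) ^ 2 = ((p : ℤ) : ℝ) ^ 2 := by
        exact_mod_cast h
      push_cast at h9
      linear_combination (1/9 : ℝ) * h9
  set T := {lm : ℤ × ℤ | ((lm.1 : ℝ) - d) ^ 2 + (lm.2 : ℝ) ^ 2 = d ^ 2} with hT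
  set S := {xy : ℤ × ℤ | xy.1 ^ 2 + xy.2 ^ 2 = p ^ 2} with hS
  have hmem : ∀ (k : Fin 4) (l m : ℤ), (3*l - p) ^ 2 + (3*m) ^ 2 = p ^ 2 →
      gmap k (3*l - p, 3*m) ∈ S := by
    intro k l m h
    fin_cases k <;> simp only [gmap, hS, Set.mem_setOf_eq] <;> linear_combination h
  let F : Fin 4 × T → S := fun x =>
    ⟨gmap x.1 (3 * x.2.1.1 - p, 3 * x.2.1.2), hmem x.1 x.2.1.1 x.2.1.2 ((key _ _).mp x.2.2)⟩
  have hinj : Function.Injective F := by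
    rintro ⟨k, ⟨⟨l, m⟩, hlm⟩⟩ ⟨k', ⟨⟨l', m'⟩, hlm'⟩⟩ heq
    simp only [F, Subtype.mk.injEq] at heq
    fin_cases k <;> fin_cases k' <;>
      simp only [gmap, Prod.mk.injEq] at heq <;>
      obtain ⟨h1, h2⟩ := heq <;>
      first
        | (exfalso; omega)
        | (simp only [Prod.mk.injEq, Subtype.mk.injEq]; refine ⟨trivial, ?_, ?_⟩ <;> omega)
  have hsurj : Function.Surjective F := by
    rintro ⟨⟨x, y⟩, hxy⟩
    have hxy' : x ^ 2 + y ^ 2 = p ^ 2 := hxy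
    have hz : (x : ZMod 3) ^ 2 + (y : ZMod 3) ^ 2 = (p : ZMod 3) ^ 2 := by
      have : ((x ^ 2 + y ^ 2 : ℤ) : ZMod 3) = ((p ^ 2 : ℤ) : ZMod 3) := by
        rw [hxy']
      push_cast at this
      linear_combination this
    have hcase : ∀ X Y P : ZMod 3, P ≠ 0 → X ^ 2 + Y ^ 2 = P ^ 2 →
        (X + P = 0 ∧ Y = 0) ∨ (X - P = 0 ∧ Y = 0) ∨ (X = 0 ∧ Y + P = 0) ∨
          (X = 0 ∧ Y - P = 0) := by
      decide
    have hdvd : ∀ a : ℤ, ((a : ZMod 3) = 0) → (3 : ℤ) ∣ a := fun a ha =>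
      (ZMod.intCast_zmod_eq_zero_iff_dvd a 3).mp ha
    have build : ∀ (k : Fin 4) (l m : ℤ),
        gmap k (3 * l - p, 3 * m) = (x, y) → ∃ z, F z = ⟨(x, y), hxy⟩ := by
      intro k l m h
      have hmemT : (l, m) ∈ T := by
        refine (key l m).mpr ?_
        fin_cases k <;> simp only [gmap, Prod.mk.injEq] at h <;>
          obtain ⟨e1, e2⟩ := h <;> subst e1 <;> subst e2 <;> linear_combination hxy'
      exact ⟨⟨k, ⟨(l, m), hmemT⟩⟩, Subtype.ext h⟩
    rcases hcase _ _ _ h3 hz with ⟨h1, h2⟩ | ⟨h1, h2⟩ | ⟨h1, h2⟩ | ⟨h1, h2⟩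
    · obtain ⟨l, hl⟩ := hdvd (x + p) (by push_cast; linear_combination h1)
      obtain ⟨m, hm⟩ := hdvd y h2
      exact build 0 l m (by simp only [gmap, Prod.mk.injEq]; omega)
    · obtain ⟨l, hl⟩ := hdvd (-x + p) (by push_cast; linear_combination -h1)
      obtain ⟨m, hm⟩ := hdvd y h2
      exact build 1 l m (by simp only [gmap, Prod.mk.injEq]; omega)
    · obtain ⟨l, hl⟩ := hdvd (y + p) (by push_cast; linear_combination h2)
      obtain ⟨m, hm⟩ := hdvd x h1
      exact build 2 l m (by simp only [gmap, Prod.mk.injEq]; omega)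
    · obtain ⟨l, hl⟩ := hdvd (-y + p) (by push_cast; linear_combination -h2)
      obtain ⟨m, hm⟩ := hdvd x h1
      exact build 3 l m (by simp only [gmap, Prod.mk.injEq]; omega)
  have hcard := Nat.card_eq_of_bijective F ⟨hinj, hsurj⟩
  rw [← hcard, Nat.card_prod]
  simp
end

section
/- Let p be an integer not divisible by 5 and d = p/5. The number of integer pairs (l, m) with (l − d)² + m² = d² equals one quarter of the number of integer pairs (x, y) with x² + y² = p². -/
def rot5 (i : Fin 4) (z : ℤ × ℤ) : ℤ × ℤ :=
  if i.val = 0 then z else if i.val = 1 then (-z.2, z.1)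
  else if i.val = 2 then (-z.1, -z.2) else (z.2, -z.1)

theorem rot5_zero (z : ℤ × ℤ) : rot5 0 z = z := rfl
theorem rot5_one (z : ℤ × ℤ) : rot5 1 z = (-z.2, z.1) := rfl
theorem rot5_two (z : ℤ × ℤ) : rot5 2 z = (-z.1, -z.2) := rfl
theorem rot5_three (z : ℤ × ℤ) : rot5 3 z = (z.2, -z.1) := rfl

theorem rot5_mem (p : ℤ) (i : Fin 4) (z : ℤ × ℤ) (h : z.1 ^ 2 + z.2 ^ 2 = p ^ 2) :
    (rot5 i z).1 ^ 2 + (rot5 i z).2 ^ 2 = p ^ 2 := by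
  fin_cases i <;> simp [rot5] <;> linear_combination h

def Fmap (p : ℤ) (q : Fin 4 × {lm : ℤ × ℤ // (5 * lm.1 - p) ^ 2 + (5 * lm.2) ^ 2 = p ^ 2}) :
    {xy : ℤ × ℤ // xy.1 ^ 2 + xy.2 ^ 2 = p ^ 2} :=
  ⟨rot5 q.1 (5 * q.2.1.1 - p, 5 * q.2.1.2), rot5_mem p q.1 _ q.2.2⟩

theorem zmod5_dvd (a : ℤ) (h : (a : ZMod 5) = 0) : (5:ℤ) ∣ a := by
  have := (ZMod.intCast_zmod_eq_zero_iff_dvd a 5).mp h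
  exact_mod_cast this

theorem Fmap_inj (p : ℤ) (hp : ¬ (5:ℤ) ∣ p) : Function.Injective (Fmap p) := by
  rintro ⟨i, ⟨⟨l, m⟩, hlm⟩⟩ ⟨j, ⟨⟨l', m'⟩, hlm'⟩⟩ heq
  simp only [Fmap, Subtype.mk.injEq] at heq
  fin_cases i <;> fin_cases j <;>
    simp [rot5, Prod.mk.injEq] at heq <;>
    first
      | (exfalso; omega)
      | (simp only [Prod.mk.injEq, Subtype.mk.injEq]
         exact ⟨by trivial, by omega, by omega⟩)

theorem Fmap_surj (p : ℤ) (hp : ¬ (5:ℤ) ∣ p) : Function.Surjective (Fmap p) := by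
  have keyA : ∀ a b c : ZMod 5, c ≠ 0 → a ^ 2 + b ^ 2 = c ^ 2 →
      (a = -c ∧ b = 0) ∨ (b = -c ∧ a = 0) ∨ (a = c ∧ b = 0) ∨ (b = c ∧ a = 0) := by decide
  have hp5 : (p : ZMod 5) ≠ 0 := by rwa [Ne, ZMod.intCast_zmod_eq_zero_iff_dvd]
  rintro ⟨⟨x, y⟩, hxy⟩
  have hxy' : x ^ 2 + y ^ 2 = p ^ 2 := hxy
  have hz : (x : ZMod 5) ^ 2 + (y : ZMod 5) ^ 2 = (p : ZMod 5) ^ 2 := by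
    have := congrArg (fun t : ℤ => (t : ZMod 5)) hxy'
    push_cast at this; exact this
  rcases keyA _ _ _ hp5 hz with ⟨h1, h2⟩ | ⟨h1, h2⟩ | ⟨h1, h2⟩ | ⟨h1, h2⟩
  · have d1 : (5:ℤ) ∣ x + p := zmod5_dvd _ (by push_cast; rw [h1]; ring)
    have d2 : (5:ℤ) ∣ y := zmod5_dvd _ h2
    refine ⟨⟨0, ⟨((x + p) / 5, y / 5), ?_⟩⟩, ?_⟩
    · have e1 : 5 * ((x + p) / 5) - p = x := by omega
      have e2 : 5 * (y / 5) = y := by omega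
      rw [e1, e2]; exact hxy'
    · apply Subtype.ext
      simp only [Fmap, rot5_zero, Prod.mk.injEq]
      constructor <;> omega
  · have d1 : (5:ℤ) ∣ y + p := zmod5_dvd _ (by push_cast; rw [h1]; ring)
    have d2 : (5:ℤ) ∣ x := zmod5_dvd _ h2
    refine ⟨⟨1, ⟨((y + p) / 5, -x / 5), ?_⟩⟩, ?_⟩
    · have e1 : 5 * ((y + p) / 5) - p = y := by omega
      have e2 : 5 * (-x / 5) = -x := by omega
      rw [e1, e2]; linear_combination hxy'
    · apply Subtype.ext
      simp only [Fmap, rot5_one, Prod.mk.injEq]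
      constructor <;> omega
  · have d1 : (5:ℤ) ∣ p - x := zmod5_dvd _ (by push_cast; rw [h1]; ring)
    have d2 : (5:ℤ) ∣ y := zmod5_dvd _ h2
    refine ⟨⟨2, ⟨((p - x) / 5, -y / 5), ?_⟩⟩, ?_⟩
    · have e1 : 5 * ((p - x) / 5) - p = -x := by omega
      have e2 : 5 * (-y / 5) = -y := by omega
      rw [e1, e2]; linear_combination hxy'
    · apply Subtype.ext
      simp only [Fmap, rot5_two, Prod.mk.injEq]
      constructor <;> omega
  · have d1 : (5:ℤ) ∣ p - y := zmod5_dvd _ (by push_cast; rw [h1]; ring)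
    have d2 : (5:ℤ) ∣ x := zmod5_dvd _ h2
    refine ⟨⟨3, ⟨((p - y) / 5, x / 5), ?_⟩⟩, ?_⟩
    · have e1 : 5 * ((p - y) / 5) - p = -y := by omega
      have e2 : 5 * (x / 5) = x := by omega
      rw [e1, e2]; linear_combination hxy'
    · apply Subtype.ext
      simp only [Fmap, rot5_three, Prod.mk.injEq]
      constructor <;> omega

theorem stmt_7 (p : ℤ) (hp : ¬ (5 ∣ p)) (d : ℝ) (hd : d = (p : ℝ) / 5) :
    4 * Nat.card {lm : ℤ × ℤ |
        ((lm.1 : ℝ) - d) ^ 2 + (lm.2 : ℝ) ^ 2 = d ^ 2}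
      = Nat.card {xy : ℤ × ℤ | xy.1 ^ 2 + xy.2 ^ 2 = p ^ 2} := by
  have hset : {lm : ℤ × ℤ | ((lm.1 : ℝ) - d) ^ 2 + (lm.2 : ℝ) ^ 2 = d ^ 2}
      = {lm : ℤ × ℤ | (5 * lm.1 - p) ^ 2 + (5 * lm.2) ^ 2 = p ^ 2} := by
    ext ⟨l, m⟩
    simp only [Set.mem_setOf_eq, hd]
    constructor
    · intro h
      have h25 : ((5 * l - p : ℤ) : ℝ) ^ 2 + ((5 * m : ℤ) : ℝ) ^ 2 = ((p : ℤ) : ℝ) ^ 2 := by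
        push_cast
        nlinarith [h]
      exact_mod_cast h25
    · intro h
      have h25 : ((5 * l - p : ℤ) : ℝ) ^ 2 + ((5 * m : ℤ) : ℝ) ^ 2 = ((p : ℤ) : ℝ) ^ 2 := by
        exact_mod_cast h
      push_cast at h25
      nlinarith [h25]
  rw [hset]
  have hbij : Function.Bijective (Fmap p) := ⟨Fmap_inj p hp, Fmap_surj p hp⟩
  have hcard := Nat.card_congr (Equiv.ofBijective (Fmap p) hbij)
  rw [Nat.card_prod, Nat.card_eq_fintype_card, Fintype.card_fin] at hcard
  exact hcard
end

section
/- For any nonnegative integer n of the form n = 4K, n = 2K, or n = K with K odd, there exists a rational number d > 0 such that the number of integer pairs (l, m) satisfying (l − d)² + m² = d² equals n. -/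
/-!
Clearing the denominator of `d = p / q`, a lattice point `(l, m)` on the circle of centre `d`
through the origin corresponds to the Gaussian integer `z = q (l + m i) - p`, which has norm `p²`
and satisfies `z ≡ -p (mod q)`. Take `p = 5 ^ s`. As `5 = (2 + i)(2 - i)` with non-associate
prime factors, the Gaussian integers of norm `5 ^ (2 s)` are exactly the
`i ^ k (2 + i) ^ a (2 - i) ^ (2 s - a)`, so there are `4 (2 s + 1)` of them, which settles `q = 1`.
For `q = 2` (resp. `q = 3`) a computation modulo `q` shows that among `z, i z`
(resp. `z, i z, -z, -i z`) exactly one is `≡ -p`, so the count is divided by `2` (resp. `4`).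
-/

theorem Nat.card_eq_card_mul_card_of_existsUnique_perm {ι α : Type*} (g : ι → Equiv.Perm α)
    {S A : Set α} (hS : ∀ i x, g i x ∈ S ↔ x ∈ S) (hA : A ⊆ S)
    (h : ∀ x ∈ S, ∃! i, g i x ∈ A) : Nat.card S = Nat.card ι * Nat.card A := by
  have hmem : ∀ i, ∀ a ∈ A, (g i).symm a ∈ S := fun i a ha => (hS i _).1 (by simpa using hA ha)
  rw [← Nat.card_prod]
  refine (Nat.card_eq_of_bijective (fun ia : ι × A => (⟨_, hmem ia.1 _ ia.2.2⟩ : S))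
    ⟨?_, ?_⟩).symm
  · rintro ⟨i, a, ha⟩ ⟨j, b, hb⟩ hab
    simp only [Subtype.mk.injEq] at hab
    obtain ⟨k, -, hk⟩ := h _ (hmem i a ha)
    obtain rfl : i = k := hk i (by simpa using ha)
    obtain rfl : j = i := hk j (by rw [hab]; simpa using hb)
    simp_all
  · rintro ⟨x, hx⟩
    obtain ⟨i, hi, -⟩ := h x hx
    exact ⟨(i, ⟨g i x, hi⟩), by simp⟩

theorem emultiplicity_mul_pow_mul {α : Type*} [CommMonoidWithZero α] [IsCancelMulZero α]
    {p u x : α} (hp : Prime p) (hu : IsUnit u) (hx : ¬p ∣ x) (a : ℕ) :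
    emultiplicity p (u * p ^ a * x) = a := by
  have hpu : ¬p ∣ u := fun h => hp.not_isUnit (isUnit_of_dvd_unit h hu)
  rw [emultiplicity_mul hp, emultiplicity_mul hp, emultiplicity_pow_self_of_prime hp,
    emultiplicity_eq_zero.2 hpu, emultiplicity_eq_zero.2 hx, zero_add, add_zero]

namespace Zsqrtd

instance isLocalHom_normMonoidHom {d : ℤ} : IsLocalHom (normMonoidHom (d := d)) :=
  ⟨fun z hz => (isUnit_iff_norm_isUnit z).2 hz⟩

theorem irreducible_of_irreducible_norm {d : ℤ} {z : ℤ√d} (h : Irreducible z.norm) :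
    Irreducible z :=
  Irreducible.of_map (f := normMonoidHom) h

theorem norm_pow {d : ℤ} (z : ℤ√d) (n : ℕ) : (z ^ n).norm = z.norm ^ n :=
  map_pow normMonoidHom z n

end Zsqrtd

open Zsqrtd

local notation "ℤ[i]" => GaussianInt

namespace GaussianInt

theorem isUnit_sqrtd : IsUnit (sqrtd : ℤ[i]) := IsUnit.of_mul_eq_one (-sqrtd) (by decide)

theorem norm_sqrtd_pow (k : ℕ) : ((sqrtd : ℤ[i]) ^ k).norm = 1 := by
  rw [norm_pow, show (sqrtd : ℤ[i]).norm = 1 by decide, one_pow]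

theorem sqrtd_pow_injective : Function.Injective fun k : Fin 4 => (sqrtd : ℤ[i]) ^ (k : ℕ) := by
  decide

theorem exists_eq_sqrtd_pow_of_isUnit {z : ℤ[i]} (hz : IsUnit z) :
    ∃ k : Fin 4, z = sqrtd ^ (k : ℕ) := by
  obtain ⟨x, y⟩ := z
  have h : x * x + y * y = 1 := by
    simpa [norm_def] using (norm_eq_one_iff' (by norm_num) _).2 hz
  have hx : -1 ≤ x ∧ x ≤ 1 := by constructor <;> nlinarith
  have hy : -1 ≤ y ∧ y ≤ 1 := by constructor <;> nlinarith
  obtain ⟨hx₁, hx₂⟩ := hx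
  obtain ⟨hy₁, hy₂⟩ := hy
  interval_cases x <;> interval_cases y <;> simp at h <;> decide

theorem exists_eq_sqrtd_pow_mul_pow_mul_star_pow {π : ℤ[i]} (hπ : Prime π) {t : ℕ} {z : ℤ[i]}
    (hz : z.norm = π.norm ^ t) :
    ∃ k : Fin 4, ∃ a ≤ t, z = sqrtd ^ (k : ℕ) * π ^ a * star π ^ (t - a) := by
  induction t generalizing z with
  | zero =>
    rw [pow_zero] at hz
    obtain ⟨k, rfl⟩ := exists_eq_sqrtd_pow_of_isUnit ((norm_eq_one_iff' (by norm_num) z).1 hz)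
    exact ⟨k, 0, le_rfl, by simp⟩
  | succ t ih =>
    have hπ0 : π.norm ≠ 0 := (norm_eq_zero_iff (by norm_num) π).not.2 hπ.ne_zero
    have cofactor {c w : ℤ[i]} (hc : c.norm = π.norm) (hcw : z = c * w) : w.norm = π.norm ^ t := by
      rw [hcw, Zsqrtd.norm_mul, hc, pow_succ'] at hz
      exact mul_left_cancel₀ hπ0 hz
    have hdvd : π ∣ z * star z := by
      rw [← norm_eq_mul_conj, hz, Int.cast_pow, norm_eq_mul_conj]
      exact (dvd_mul_right π _).pow t.succ_ne_zero
    rcases hπ.dvd_or_dvd hdvd with ⟨w, hw⟩ | ⟨w, hw⟩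
    · obtain ⟨k, a, ha, rfl⟩ := ih (cofactor rfl hw)
      refine ⟨k, a + 1, by omega, ?_⟩
      rw [hw, Nat.add_sub_add_right]; ring
    · have hw' : z = star π * star w := by rw [← star_mul', ← hw, star_star]
      obtain ⟨k, a, ha, hk⟩ := ih (cofactor (norm_conj π) hw')
      refine ⟨k, a, by omega, ?_⟩
      rw [hw', hk, Nat.sub_add_comm ha]; ring

theorem card_norm_eq_norm_pow {π : ℤ[i]} (hπ : Prime π) (hπσ : ¬π ∣ star π) (t : ℕ) :
    Nat.card {z : ℤ[i] | z.norm = π.norm ^ t} = 4 * (t + 1) := by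
  let f (ka : Fin 4 × Fin (t + 1)) : ℤ[i] :=
    sqrtd ^ (ka.1 : ℕ) * π ^ (ka.2 : ℕ) * star π ^ (t - ka.2)
  have hf : f.Injective := by
    rintro ⟨k, a⟩ ⟨j, b⟩ hkj
    have hσ : ∀ n, ¬π ∣ star π ^ n := fun n h => hπσ (hπ.dvd_of_dvd_pow h)
    have hab : a = b := by
      have := congrArg (emultiplicity π) hkj
      simp only [f, emultiplicity_mul_pow_mul hπ (isUnit_sqrtd.pow _) (hσ _)] at this
      exact Fin.ext (by exact_mod_cast this)
    subst hab
    simp only [f, mul_left_inj' (pow_ne_zero _ (star_ne_zero.2 hπ.ne_zero)),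
      mul_left_inj' (pow_ne_zero _ hπ.ne_zero)] at hkj
    rw [sqrtd_pow_injective hkj]
  have himage : Set.range f = {z : ℤ[i] | z.norm = π.norm ^ t} := by
    ext z
    constructor
    · rintro ⟨⟨k, a⟩, rfl⟩
      change (_ * _ * _ : ℤ[i]).norm = _
      rw [Zsqrtd.norm_mul, Zsqrtd.norm_mul, norm_sqrtd_pow, norm_pow, norm_pow, norm_conj, one_mul,
        ← pow_add, Nat.add_sub_cancel' a.is_le]
    · intro hz
      obtain ⟨k, a, ha, rfl⟩ := exists_eq_sqrtd_pow_mul_pow_mul_star_pow hπ hz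
      exact ⟨(k, ⟨a, by omega⟩), rfl⟩
  rw [← himage, Nat.card_range_of_injective hf, Nat.card_prod, Nat.card_fin, Nat.card_fin]

/-- The hypothesis is `n ∣ i ^ k (x + y i) + p`, written out in real and imaginary parts
modulo `n`. -/
theorem card_norm_eq_sq_eq_mul_card_dvd (n m : ℕ) (p : ℤ)
    (h : ∀ x y : ZMod n, x ^ 2 + y ^ 2 = p ^ 2 → ∃! k : Fin m,
      ((sqrtd ^ (k : ℕ) : ℤ[i]).re * x - (sqrtd ^ (k : ℕ) : ℤ[i]).im * y + p : ZMod n) = 0 ∧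
      ((sqrtd ^ (k : ℕ) : ℤ[i]).re * y + (sqrtd ^ (k : ℕ) : ℤ[i]).im * x : ZMod n) = 0) :
    Nat.card {z : ℤ[i] | z.norm = p ^ 2} =
      m * Nat.card {z : ℤ[i] | z.norm = p ^ 2 ∧ (n : ℤ[i]) ∣ z + p} := by
  have hrot (k : ℕ) (z : ℤ[i]) : (sqrtd ^ k * z).norm = z.norm := by
    rw [Zsqrtd.norm_mul, norm_sqrtd_pow, one_mul]
  have hdvd (k : ℕ) (z : ℤ[i]) : (n : ℤ[i]) ∣ sqrtd ^ k * z + (p : ℤ[i]) ↔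
      ((sqrtd ^ k : ℤ[i]).re * z.re - (sqrtd ^ k : ℤ[i]).im * z.im + p : ZMod n) = 0 ∧
      ((sqrtd ^ k : ℤ[i]).re * z.im + (sqrtd ^ k : ℤ[i]).im * z.re : ZMod n) = 0 := by
    rw [← Int.cast_natCast, intCast_dvd, ← ZMod.intCast_zmod_eq_zero_iff_dvd,
      ← ZMod.intCast_zmod_eq_zero_iff_dvd]
    simp only [re_add, im_add, re_mul, im_mul, re_intCast, im_intCast]
    push_cast
    ring_nf
  have hunique (z : ℤ[i]) (hz : z.norm = p ^ 2) :
      ∃! k : Fin m, (sqrtd ^ (k : ℕ) * z).norm = p ^ 2 ∧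
        (n : ℤ[i]) ∣ sqrtd ^ (k : ℕ) * z + (p : ℤ[i]) := by
    have hxy : (z.re : ZMod n) ^ 2 + (z.im : ZMod n) ^ 2 = (p : ZMod n) ^ 2 := by
      have := congrArg (Int.cast : ℤ → ZMod n) hz
      push_cast [norm_def] at this
      linear_combination this
    refine (existsUnique_congr fun k => ?_).1 (h _ _ hxy)
    rw [hrot, hdvd, and_iff_right hz]
  simpa using Nat.card_eq_card_mul_card_of_existsUnique_perm
    (fun k : Fin m => Units.mulLeft (isUnit_sqrtd.unit ^ (k : ℕ)))
    (S := {z : ℤ[i] | z.norm = p ^ 2}) (A := {z | z.norm = p ^ 2 ∧ (n : ℤ[i]) ∣ z + p})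
    (fun k z => by simp [hrot]) (fun z hz => hz.1) (by simpa using hunique)

theorem card_norm_eq_sq_eq_two_mul {p : ℤ} (hp : ¬2 ∣ p) :
    Nat.card {z : ℤ[i] | z.norm = p ^ 2} =
      2 * Nat.card {z : ℤ[i] | z.norm = p ^ 2 ∧ 2 ∣ z + p} := by
  have hp' : (p : ZMod 2) ≠ 0 := (ZMod.intCast_zmod_eq_zero_iff_dvd p 2).not.2 hp
  refine (card_norm_eq_sq_eq_mul_card_dvd 2 2 p fun x y => ?_).trans (by simp)
  generalize (p : ZMod 2) = c at hp' ⊢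
  revert x y c
  unfold ExistsUnique
  decide

theorem card_norm_eq_sq_eq_four_mul {p : ℤ} (hp : ¬3 ∣ p) :
    Nat.card {z : ℤ[i] | z.norm = p ^ 2} =
      4 * Nat.card {z : ℤ[i] | z.norm = p ^ 2 ∧ 3 ∣ z + p} := by
  have hp' : (p : ZMod 3) ≠ 0 := (ZMod.intCast_zmod_eq_zero_iff_dvd p 3).not.2 hp
  refine (card_norm_eq_sq_eq_mul_card_dvd 3 4 p fun x y => ?_).trans (by simp)
  generalize (p : ZMod 3) = c at hp' ⊢
  revert x y c
  unfold ExistsUnique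
  decide

theorem prime_two_add_sqrtd : Prime (⟨2, 1⟩ : ℤ[i]) :=
  (irreducible_of_irreducible_norm (z := ⟨2, 1⟩) <| by
    rw [show (⟨2, 1⟩ : ℤ[i]).norm = 5 by decide]
    exact (Int.prime_iff_natAbs_prime.2 (by norm_num)).irreducible).prime

theorem two_add_sqrtd_not_dvd_star : ¬(⟨2, 1⟩ : ℤ[i]) ∣ star ⟨2, 1⟩ := by
  intro h
  have := map_dvd normMonoidHom (dvd_sub dvd_rfl h)
  revert this
  decide

theorem card_norm_eq_sq_five_pow (s : ℕ) :
    Nat.card {z : ℤ[i] | z.norm = (5 ^ s : ℤ) ^ 2} = 4 * (2 * s + 1) := by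
  have := card_norm_eq_norm_pow prime_two_add_sqrtd two_add_sqrtd_not_dvd_star (2 * s)
  rwa [show (⟨2, 1⟩ : ℤ[i]).norm = 5 by decide, pow_mul'] at this

theorem card_circle_eq (p : ℤ) {q : ℕ} (hq : q ≠ 0) :
    Nat.card {lm : ℤ × ℤ |
        ((lm.1 : ℝ) - ((p / q : ℚ) : ℝ)) ^ 2 + (lm.2 : ℝ) ^ 2 = ((p / q : ℚ) : ℝ) ^ 2} =
      Nat.card {z : ℤ[i] | z.norm = p ^ 2 ∧ (q : ℤ[i]) ∣ z + p} := by
  have hq' : (q : ℤ[i]) ≠ 0 := Nat.cast_ne_zero.2 hq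
  let f (lm : ℤ × ℤ) : ℤ[i] := q * ⟨lm.1, lm.2⟩ - p
  have hf : f.Injective := by
    intro a b hab
    have := mul_left_cancel₀ hq' (sub_left_injective hab)
    simpa [Prod.ext_iff, Zsqrtd.ext_iff] using this
  have hcircle (l m : ℤ) : ((l : ℝ) - ((p / q : ℚ) : ℝ)) ^ 2 + (m : ℝ) ^ 2 = ((p / q : ℚ) : ℝ) ^ 2 ↔
      (f (l, m)).norm = p ^ 2 := by
    have hqr : (q : ℝ) ≠ 0 := Nat.cast_ne_zero.2 hq
    have hnorm : (f (l, m)).norm = (q * l - p) ^ 2 + (q * m) ^ 2 := by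
      simp [f, norm_def]
      ring
    rw [hnorm, ← @Int.cast_inj ℝ]
    push_cast
    field_simp
  suffices himage : f '' _ = {z : ℤ[i] | z.norm = p ^ 2 ∧ (q : ℤ[i]) ∣ z + p} by
    rw [← himage, Nat.card_image_of_injective hf]
  ext z
  constructor
  · rintro ⟨⟨l, m⟩, h, rfl⟩
    exact ⟨(hcircle l m).1 h, ⟨⟨l, m⟩, by simp [f]⟩⟩
  · rintro ⟨hz, w, hw⟩
    have hzw : f (w.re, w.im) = z := by
      change (q : ℤ[i]) * w - p = z
      rw [← hw, add_sub_cancel_right]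
    exact ⟨(w.re, w.im), (hcircle _ _).2 (by rw [hzw]; exact hz), hzw⟩

end GaussianInt

theorem stmt_9 (n : ℕ)
    (h : ∃ K : ℕ, Odd K ∧ (n = 4 * K ∨ n = 2 * K ∨ n = K)) :
    ∃ d : ℚ, 0 < d ∧
      Nat.card {lm : ℤ × ℤ |
        ((lm.1 : ℝ) - (d : ℝ)) ^ 2 + (lm.2 : ℝ) ^ 2 = (d : ℝ) ^ 2} = n := by
  obtain ⟨K, ⟨s, rfl⟩, hn⟩ := h
  have hcard := GaussianInt.card_norm_eq_sq_five_pow s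
  have htwo : ¬(2 : ℤ) ∣ 5 ^ s := fun h => by
    have := Int.prime_two.dvd_of_dvd_pow h; norm_num at this
  have hthree : ¬(3 : ℤ) ∣ 5 ^ s := fun h => by
    have := Int.prime_three.dvd_of_dvd_pow h; norm_num at this
  rcases hn with rfl | rfl | rfl
  · refine ⟨((5 ^ s : ℤ) : ℚ) / (1 : ℕ), by positivity, ?_⟩
    rw [GaussianInt.card_circle_eq _ one_ne_zero]
    simpa using hcard
  · refine ⟨((5 ^ s : ℤ) : ℚ) / (2 : ℕ), by positivity, ?_⟩
    rw [GaussianInt.card_circle_eq _ two_ne_zero]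
    have := GaussianInt.card_norm_eq_sq_eq_two_mul htwo
    push_cast at this ⊢
    omega
  · refine ⟨((5 ^ s : ℤ) : ℚ) / (3 : ℕ), by positivity, ?_⟩
    rw [GaussianInt.card_circle_eq _ three_ne_zero]
    have := GaussianInt.card_norm_eq_sq_eq_four_mul hthree
    push_cast at this ⊢
    omega
end

section
/- For fixed real d with 8πd² ∈ ℤ[√D] for some positive integer D, there is at most one positive integer n for which there exists u ∈ ℤ⁻ with 64π²d⁴ − 256πund² − n² = 0; that is, if (n, u) and (N, U) are two such pairs with n, N > 0 and u, U < 0, then n = N and u = U. -/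
theorem stmt_10 (d : ℝ)
    (hd : ∃ D : ℕ, 0 < D ∧ ∃ a b : ℤ,
      8 * Real.pi * d ^ 2 = (a : ℝ) + (b : ℝ) * Real.sqrt D)
    (n N u U : ℤ) (hn : 0 < n) (hN : 0 < N) (hu : u < 0) (hU : U < 0)
    (h1 : 64 * Real.pi ^ 2 * d ^ 4 - 256 * Real.pi * (u : ℝ) * (n : ℝ) * d ^ 2
        - (n : ℝ) ^ 2 = 0)
    (h2 : 64 * Real.pi ^ 2 * d ^ 4 - 256 * Real.pi * (U : ℝ) * (N : ℝ) * d ^ 2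
        - (N : ℝ) ^ 2 = 0) :
    n = N ∧ u = U := by
  set x : ℝ := 8 * Real.pi * d ^ 2 with hx
  have hnR : (0 : ℝ) < (n : ℝ) := by exact_mod_cast hn
  have e1 : (x - 16 * (u : ℝ) * n) ^ 2 = (n : ℝ) ^ 2 * (256 * (u : ℝ) ^ 2 + 1) := by
    rw [hx]; linear_combination h1
  have sub : 32 * x * ((U : ℝ) * N - (u : ℝ) * n) = (n : ℝ) ^ 2 - (N : ℝ) ^ 2 := by
    rw [hx]; linear_combination h1 - h2
  rcases eq_or_ne (u * n) (U * N) with hc | hc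
  · -- same product: n = N then u = U
    have hcR : (u : ℝ) * n = (U : ℝ) * N := by exact_mod_cast hc
    have hsq : (n : ℝ) ^ 2 = (N : ℝ) ^ 2 := by
      have := sub
      rw [hcR] at this
      linarith
    have hsqZ : n ^ 2 = N ^ 2 := by exact_mod_cast hsq
    have hnN : n = N := by nlinarith
    refine ⟨hnN, ?_⟩
    subst hnN
    exact mul_right_cancel₀ (by omega) hc
  · -- x is rational; derive contradiction
    exfalso
    have hden : ((U : ℝ) * N - (u : ℝ) * n) ≠ 0 := by
      intro h
      apply hc
      have : (u : ℝ) * n = (U : ℝ) * N := by linarith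
      exact_mod_cast this
    set q : ℚ := ((n : ℚ) ^ 2 - (N : ℚ) ^ 2) / (32 * ((U : ℚ) * N - (u : ℚ) * n)) with hq
    have hqx : (q : ℝ) = x := by
      rw [hq]
      push_cast
      have h32 : (32 * ((U : ℝ) * N - (u : ℝ) * n)) ≠ 0 :=
        mul_ne_zero (by norm_num) hden
      rw [div_eq_iff h32]
      linarith [sub]
    -- sqrt(256 u^2 + 1) is rational
    have hsqrt : Real.sqrt ((256 * u ^ 2 + 1 : ℤ) : ℝ) = |x - 16 * (u : ℝ) * n| / n := by
      have : ((256 * u ^ 2 + 1 : ℤ) : ℝ) = ((x - 16 * (u : ℝ) * n) / n) ^ 2 := by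
        push_cast
        field_simp
        linarith [e1]
      rw [this, Real.sqrt_sq_eq_abs, abs_div, abs_of_pos hnR]
    have hrat : ¬ Irrational (Real.sqrt ((256 * u ^ 2 + 1 : ℤ) : ℝ)) := by
      rw [hsqrt]
      have : |x - 16 * (u : ℝ) * n| / n = ((|q - 16 * (u : ℚ) * n| / n : ℚ) : ℝ) := by
        push_cast
        rw [hqx]
      rw [this]
      exact Rat.not_irrational _
    apply hrat
    rw [irrational_sqrt_intCast_iff_of_nonneg (by positivity)]
    rintro ⟨k, hk⟩
    have hk' : |k| * |k| = 256 * u ^ 2 + 1 := by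
      rw [← abs_mul, ← hk, abs_of_nonneg (by positivity)]
    set m : ℤ := |k| with hm
    have hm0 : 0 ≤ m := abs_nonneg k
    have hfac : (m + 16 * u) * (m - 16 * u) = 1 := by ring_nf; nlinarith [hk']
    have hge : 16 ≤ m - 16 * u := by nlinarith [hk']
    have hdvd : (m - 16 * u) ∣ 1 := Dvd.intro_left _ hfac
    have := Int.le_of_dvd one_pos hdvd
    omega
end

section
/- Let n, N be positive integers and u, U negative integers. If n·(−32u + √(1024u² + 1)) = N·(−32U + √(1024U² + 1)), then n = N and u = U. -/
lemma notSq_aux (v : ℤ) (hv : v ≠ 0) : ¬ IsSquare (1024 * v ^ 2 + 1 : ℤ) := by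
  rintro ⟨r, hr⟩
  have h1 : (r - 32 * v) * (r + 32 * v) = 1 := by linear_combination -hr
  rcases Int.mul_eq_one_iff_eq_one_or_neg_one.mp h1 with ⟨h2, h3⟩ | ⟨h2, h3⟩ <;> omega

lemma irr_aux (v : ℤ) (hv : v ≠ 0) :
    Irrational (Real.sqrt (1024 * (v : ℝ) ^ 2 + 1)) := by
  have : (1024 * (v : ℝ) ^ 2 + 1) = ((1024 * v ^ 2 + 1 : ℤ) : ℝ) := by push_cast; ring
  rw [this, irrational_sqrt_intCast_iff]
  exact ⟨notSq_aux v hv, by positivity⟩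

theorem stmt_11 (n N u U : ℤ) (hn : 0 < n) (hN : 0 < N) (hu : u < 0) (hU : U < 0)
    (h : (n : ℝ) * (-32 * (u : ℝ) + Real.sqrt (1024 * (u : ℝ) ^ 2 + 1))
        = (N : ℝ) * (-32 * (U : ℝ) + Real.sqrt (1024 * (U : ℝ) ^ 2 + 1))) :
    n = N ∧ u = U := by
  set x := Real.sqrt (1024 * (u : ℝ) ^ 2 + 1) with hxdef
  set y := Real.sqrt (1024 * (U : ℝ) ^ 2 + 1) with hydef
  have hx2 : x ^ 2 = 1024 * (u : ℝ) ^ 2 + 1 := Real.sq_sqrt (by positivity)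
  have hy2 : y ^ 2 = 1024 * (U : ℝ) ^ 2 + 1 := Real.sq_sqrt (by positivity)
  have hyirr : Irrational y := irr_aux U (by omega)
  -- n*x - N*y = 32*(n*u - N*U)
  have key : (n : ℝ) * x = (32 * (n * u - N * U) : ℤ) + (N : ℝ) * y := by
    push_cast
    linarith [h]
  set c : ℤ := 32 * (n * u - N * U) with hcdef
  have hsq : (n : ℝ) ^ 2 * x ^ 2 = (c : ℝ) ^ 2 + 2 * c * N * y + (N : ℝ) ^ 2 * y ^ 2 := by
    linear_combination ((n : ℝ) * x + (c : ℝ) + (N : ℝ) * y) * key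
  have hc0 : c = 0 := by
    by_contra hc
    have hNy : (2 * c * N : ℝ) * y = (n : ℝ) ^ 2 * x ^ 2 - c ^ 2 - (N : ℝ) ^ 2 * y ^ 2 := by
      linarith [hsq]
    have hK : ((2 * c * N : ℤ) : ℝ) * y
        = ((n ^ 2 * (1024 * u ^ 2 + 1) - c ^ 2 - N ^ 2 * (1024 * U ^ 2 + 1) : ℤ) : ℝ) := by
      push_cast
      rw [hx2, hy2] at hNy
      push_cast at hNy
      linarith [hNy]
    set d : ℤ := 2 * c * N with hddef
    set K : ℤ := n ^ 2 * (1024 * u ^ 2 + 1) - c ^ 2 - N ^ 2 * (1024 * U ^ 2 + 1)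
    have hd0 : d ≠ 0 := by
      simp [hddef]
      constructor <;> omega
    have : y = ((K : ℚ) / (d : ℚ) : ℚ) := by
      have hdR : ((d : ℤ) : ℝ) ≠ 0 := by exact_mod_cast hd0
      push_cast
      field_simp
      linarith [hK]
    exact hyirr ⟨(K : ℚ) / (d : ℚ), this.symm⟩
  -- now n*x = N*y, square both sides
  have hnx : (n : ℝ) * x = (N : ℝ) * y := by
    rw [key, hc0]; push_cast; ring
  have hsq2 : (n : ℝ) ^ 2 * (1024 * (u : ℝ) ^ 2 + 1) = (N : ℝ) ^ 2 * (1024 * (U : ℝ) ^ 2 + 1) := by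
    rw [← hx2, ← hy2]
    have := congrArg (· ^ 2) hnx
    simpa [mul_pow] using this
  have hZ : n ^ 2 * (1024 * u ^ 2 + 1) = N ^ 2 * (1024 * U ^ 2 + 1) := by
    exact_mod_cast hsq2
  have hc0' : n * u = N * U := by omega
  have he : (n * u) ^ 2 = (N * U) ^ 2 := by rw [hc0']
  have h2 : n ^ 2 = N ^ 2 := by linear_combination hZ - 1024 * he
  have h3 : (n - N) * (n + N) = 0 := by linear_combination h2
  have hnN : n = N := by rcases mul_eq_zero.mp h3 with h4 | h4 <;> omega
  refine ⟨hnN, ?_⟩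
  subst hnN
  have : n * u = n * U := hc0'
  exact mul_left_cancel₀ (by omega) this
end

section
/- Let d = p/q ∈ ℚ with gcd(p, q) = 1, q ∈ {1,2,3,4,5}, and p ≠ 0. The number of integer pairs (l, m) with (l − d)² + m² = d² equals r₂(p²)·c_q, where c₁ = 1, c₂ = 1/2, and c₃ = c₄ = c₅ = 1/4, and r₂(N) denotes the number of integer pairs (x, y) with x² + y² = N. -/
private def ggg (xy : ℤ × ℤ) : Bool × Bool → ℤ × ℤ
  | (true, true) => (xy.1, xy.2)
  | (true, false) => (-xy.1, xy.2)
  | (false, true) => (xy.2, xy.1)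
  | (false, false) => (xy.2, -xy.1)

private lemma card_four (p q : ℤ)
    (h1 : ∀ x y : ℤ, x ^ 2 + y ^ 2 = p ^ 2 → (q ∣ x ↔ ¬ q ∣ y))
    (h2 : ∀ x y : ℤ, x ^ 2 + y ^ 2 = p ^ 2 → q ∣ y → q ∣ x + p ∨ q ∣ x - p)
    (h3 : ∀ x : ℤ, q ∣ x + p → q ∣ x - p → False) :
    Nat.card {xy : ℤ × ℤ | xy.1 ^ 2 + xy.2 ^ 2 = p ^ 2}
      = 4 * Nat.card {xy : ℤ × ℤ |
          xy.1 ^ 2 + xy.2 ^ 2 = p ^ 2 ∧ q ∣ xy.1 + p ∧ q ∣ xy.2} := by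
  classical
  set S : Set (ℤ × ℤ) := {xy | xy.1 ^ 2 + xy.2 ^ 2 = p ^ 2} with hSdef
  set T : Set (ℤ × ℤ) := {xy | xy.1 ^ 2 + xy.2 ^ 2 = p ^ 2 ∧ q ∣ xy.1 + p ∧ q ∣ xy.2} with hTdef
  have hmem : ∀ xy : ℤ × ℤ, xy ∈ T → ∀ st : Bool × Bool, ggg xy st ∈ S := by
    rintro ⟨x, y⟩ ⟨e, -, -⟩ ⟨s, t⟩
    cases s <;> cases t <;>
      simp only [ggg, S, Set.mem_setOf_eq] at * <;> linear_combination e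
  let G : T × (Bool × Bool) → S := fun a => ⟨ggg a.1.1 a.2, hmem a.1.1 a.1.2 a.2⟩
  have hGbij : Function.Bijective G := by
    constructor
    · rintro ⟨⟨⟨x, y⟩, e, d1, d2⟩, s, t⟩ ⟨⟨⟨x', y'⟩, e', d1', d2'⟩, s', t'⟩ h
      simp only [G, Subtype.mk.injEq] at h
      have nx : ¬ q ∣ x := fun hd => (h1 x y e).mp hd d2
      have nx' : ¬ q ∣ x' := fun hd => (h1 x' y' e').mp hd d2'
      suffices hgoal : x = x' ∧ y = y' ∧ s = s' ∧ t = t' by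
        obtain ⟨h1e, h2e, h3e, h4e⟩ := hgoal
        subst h1e; subst h2e; subst h3e; subst h4e; rfl
      cases s <;> cases t <;> cases s' <;> cases t' <;>
          simp only [ggg, Prod.mk.injEq] at h <;> obtain ⟨ha, hb⟩ := h
      -- (f,f) vs (f,f) : (y,-x) = (y',-x')
      · exact ⟨by omega, ha, rfl, rfl⟩
      -- (f,f) vs (f,t) : (y,-x) = (y',x')
      · exact absurd ((by omega : x - p = -(x' + p)) ▸ dvd_neg.mpr d1') (fun hdd => h3 x d1 hdd)
      -- (f,f) vs (t,f) : (y,-x) = (-x',y')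
      · exact absurd ((by omega : x' = -y) ▸ dvd_neg.mpr d2) nx'
      -- (f,f) vs (t,t) : (y,-x) = (x',y')
      · exact absurd (ha ▸ d2) nx'
      -- (f,t) vs (f,f) : (y,x) = (y',-x')
      · exact absurd ((by omega : x - p = -(x' + p)) ▸ dvd_neg.mpr d1') (fun hdd => h3 x d1 hdd)
      -- (f,t) vs (f,t) : (y,x) = (y',x')
      · exact ⟨hb, ha, rfl, rfl⟩
      -- (f,t) vs (t,f) : (y,x) = (-x',y')
      · exact absurd ((by omega : x' = -y) ▸ dvd_neg.mpr d2) nx'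
      -- (f,t) vs (t,t) : (y,x) = (x',y')
      · exact absurd (ha ▸ d2) nx'
      -- (t,f) vs (f,f) : (-x,y) = (y',-x')
      · exact absurd ((by omega : x = -y') ▸ dvd_neg.mpr d2') nx
      -- (t,f) vs (f,t) : (-x,y) = (y',x')
      · exact absurd ((by omega : x = -y') ▸ dvd_neg.mpr d2') nx
      -- (t,f) vs (t,f) : (-x,y) = (-x',y')
      · exact ⟨by omega, hb, rfl, rfl⟩
      -- (t,f) vs (t,t) : (-x,y) = (x',y')
      · exact absurd ((by omega : x - p = -(x' + p)) ▸ dvd_neg.mpr d1') (fun hdd => h3 x d1 hdd)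
      -- (t,t) vs (f,f) : (x,y) = (y',-x')
      · exact absurd (ha ▸ d2') nx
      -- (t,t) vs (f,t) : (x,y) = (y',x')
      · exact absurd (ha ▸ d2') nx
      -- (t,t) vs (t,f) : (x,y) = (-x',y')
      · exact absurd ((by omega : x - p = -(x' + p)) ▸ dvd_neg.mpr d1') (fun hdd => h3 x d1 hdd)
      -- (t,t) vs (t,t)
      · exact ⟨ha, hb, rfl, rfl⟩
    · rintro ⟨⟨a, b⟩, e⟩
      simp only [S, Set.mem_setOf_eq] at e
      by_cases hb : q ∣ b
      · rcases h2 a b e hb with h4 | h4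
        · exact ⟨⟨⟨(a, b), ⟨e, h4, hb⟩⟩, (true, true)⟩, rfl⟩
        · refine ⟨⟨⟨(-a, b), ⟨by linear_combination e, ?_, hb⟩⟩, (true, false)⟩, ?_⟩
          · exact (by ring : -(a - p) = -a + p) ▸ dvd_neg.mpr h4
          · simp [G, ggg]
      · have ha : q ∣ a := (h1 a b e).mpr hb
        have e' : b ^ 2 + a ^ 2 = p ^ 2 := by linarith
        rcases h2 b a e' ha with h4 | h4
        · exact ⟨⟨⟨(b, a), ⟨e', h4, ha⟩⟩, (false, true)⟩, rfl⟩
        · refine ⟨⟨⟨(-b, a), ⟨by linear_combination e, ?_, ha⟩⟩, (false, false)⟩, ?_⟩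
          · exact (by ring : -(b - p) = -b + p) ▸ dvd_neg.mpr h4
          · simp [G, ggg]
  have := Nat.card_congr (Equiv.ofBijective G hGbij)
  rw [Nat.card_prod] at this
  have h4c : Nat.card (Bool × Bool) = 4 := by simp [Nat.card_eq_fintype_card]
  rw [h4c] at this
  omega


private def gg2 (xy : ℤ × ℤ) : Bool → ℤ × ℤ
  | true => (xy.1, xy.2)
  | false => (xy.2, xy.1)

private lemma card_two (p : ℤ) (hp2 : ¬ (2:ℤ) ∣ p)
    (h1 : ∀ x y : ℤ, x ^ 2 + y ^ 2 = p ^ 2 → ((2:ℤ) ∣ x ↔ ¬ (2:ℤ) ∣ y)) :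
    Nat.card {xy : ℤ × ℤ | xy.1 ^ 2 + xy.2 ^ 2 = p ^ 2}
      = 2 * Nat.card {xy : ℤ × ℤ |
          xy.1 ^ 2 + xy.2 ^ 2 = p ^ 2 ∧ (2:ℤ) ∣ xy.1 + p ∧ (2:ℤ) ∣ xy.2} := by
  classical
  set S : Set (ℤ × ℤ) := {xy | xy.1 ^ 2 + xy.2 ^ 2 = p ^ 2} with hSdef
  set T : Set (ℤ × ℤ) := {xy | xy.1 ^ 2 + xy.2 ^ 2 = p ^ 2 ∧ (2:ℤ) ∣ xy.1 + p ∧ (2:ℤ) ∣ xy.2}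
    with hTdef
  have hmem : ∀ xy : ℤ × ℤ, xy ∈ T → ∀ st : Bool, gg2 xy st ∈ S := by
    rintro ⟨x, y⟩ ⟨e, -, -⟩ s
    cases s <;> simp only [gg2, S, Set.mem_setOf_eq] at * <;> linear_combination e
  let G : T × Bool → S := fun a => ⟨gg2 a.1.1 a.2, hmem a.1.1 a.1.2 a.2⟩
  have hGbij : Function.Bijective G := by
    constructor
    · rintro ⟨⟨⟨x, y⟩, e, d1, d2⟩, s⟩ ⟨⟨⟨x', y'⟩, e', d1', d2'⟩, s'⟩ h
      simp only [G, Subtype.mk.injEq] at h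
      have nx : ¬ (2:ℤ) ∣ x := by omega
      have nx' : ¬ (2:ℤ) ∣ x' := by omega
      suffices hgoal : x = x' ∧ y = y' ∧ s = s' by
        obtain ⟨h1e, h2e, h3e⟩ := hgoal
        subst h1e; subst h2e; subst h3e; rfl
      cases s <;> cases s' <;> simp only [gg2, Prod.mk.injEq] at h <;> obtain ⟨ha, hb⟩ := h
      · exact ⟨hb, ha, rfl⟩
      · exact absurd (ha ▸ d2) nx'
      · exact absurd (ha ▸ d2') nx
      · exact ⟨ha, hb, rfl⟩
    · rintro ⟨⟨a, b⟩, e⟩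
      simp only [S, Set.mem_setOf_eq] at e
      by_cases hb : (2:ℤ) ∣ b
      · have ha : ¬ (2:ℤ) ∣ a := fun hd => (h1 a b e).mp hd hb
        exact ⟨⟨⟨(a, b), ⟨e, by omega, hb⟩⟩, true⟩, rfl⟩
      · have ha : (2:ℤ) ∣ a := (h1 a b e).mpr hb
        have e' : b ^ 2 + a ^ 2 = p ^ 2 := by linarith
        exact ⟨⟨⟨(b, a), ⟨e', by omega, ha⟩⟩, false⟩, rfl⟩
  have := Nat.card_congr (Equiv.ofBijective G hGbij)
  rw [Nat.card_prod] at this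
  have h2c : Nat.card Bool = 2 := by simp [Nat.card_eq_fintype_card]
  rw [h2c] at this
  omega

private lemma card_trans (p q : ℤ) (hq : 0 < q) (d : ℚ) (hd : d = (p : ℚ) / (q : ℚ)) :
    Nat.card {lm : ℤ × ℤ |
        ((lm.1 : ℝ) - (d : ℝ)) ^ 2 + (lm.2 : ℝ) ^ 2 = (d : ℝ) ^ 2}
      = Nat.card {xy : ℤ × ℤ |
          xy.1 ^ 2 + xy.2 ^ 2 = p ^ 2 ∧ q ∣ xy.1 + p ∧ q ∣ xy.2} := by
  classical
  have hq0 : (q : ℝ) ≠ 0 := by exact_mod_cast hq.ne'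
  have hpd : (p : ℝ) = (q : ℝ) * (d : ℝ) := by
    rw [hd]; push_cast; field_simp
  have key : ∀ l m : ℤ,
      (((l : ℝ) - (d : ℝ)) ^ 2 + (m : ℝ) ^ 2 = (d : ℝ) ^ 2) ↔
        (q * l - p) ^ 2 + (q * m) ^ 2 = p ^ 2 := by
    intro l m
    constructor
    · intro h
      have : ((q * l - p : ℤ) : ℝ) ^ 2 + ((q * m : ℤ) : ℝ) ^ 2 = ((p : ℤ) : ℝ) ^ 2 := by
        push_cast
        rw [hpd]
        linear_combination ((q : ℝ) ^ 2) * h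
      exact_mod_cast this
    · intro h
      have h' : ((q : ℝ) * l - p) ^ 2 + ((q : ℝ) * m) ^ 2 = (p : ℝ) ^ 2 := by
        exact_mod_cast h
      rw [hpd] at h'
      exact mul_left_cancel₀ (pow_ne_zero 2 hq0)
        (show (q : ℝ) ^ 2 * (((l : ℝ) - (d : ℝ)) ^ 2 + (m : ℝ) ^ 2)
            = (q : ℝ) ^ 2 * (d : ℝ) ^ 2 by linear_combination h')
  set A : Set (ℤ × ℤ) := {lm | ((lm.1 : ℝ) - (d : ℝ)) ^ 2 + (lm.2 : ℝ) ^ 2 = (d : ℝ) ^ 2}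
  set T : Set (ℤ × ℤ) := {xy | xy.1 ^ 2 + xy.2 ^ 2 = p ^ 2 ∧ q ∣ xy.1 + p ∧ q ∣ xy.2}
  let F : A → T := fun a =>
    ⟨(q * a.1.1 - p, q * a.1.2), by
      refine ⟨(key a.1.1 a.1.2).mp a.2, ⟨a.1.1, by ring⟩, ⟨a.1.2, rfl⟩⟩⟩
  have hF : Function.Bijective F := by
    constructor
    · rintro ⟨⟨l, m⟩, hA⟩ ⟨⟨l', m'⟩, hA'⟩ h
      simp only [F, Subtype.mk.injEq, Prod.mk.injEq] at h
      obtain ⟨ha, hb⟩ := h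
      have hl : l = l' := by
        have : q * l = q * l' := by omega
        exact mul_left_cancel₀ hq.ne' this
      have hm : m = m' := mul_left_cancel₀ hq.ne' hb
      subst hl; subst hm; rfl
    · rintro ⟨⟨x, y⟩, e, ⟨l, hl⟩, ⟨m, hm⟩⟩
      refine ⟨⟨(l, m), ?_⟩, ?_⟩
      · apply (key l m).mpr
        have hx : q * l - p = x := by omega
        rw [hx, ← hm]
        exact e
      · simp only [F, Subtype.mk.injEq, Prod.mk.injEq]
        constructor <;> omega
  exact Nat.card_congr (Equiv.ofBijective F hF)

private lemma zmod_dvd (n : ℕ) [NeZero n] (x : ℤ) :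
    ((n : ℤ) ∣ x) ↔ ((x : ZMod n) = 0) := (ZMod.intCast_zmod_eq_zero_iff_dvd x n).symm

private lemma zmod_sq (n : ℕ) (x y p : ℤ) (h : x ^ 2 + y ^ 2 = p ^ 2) :
    (x : ZMod n) ^ 2 + (y : ZMod n) ^ 2 = (p : ZMod n) ^ 2 := by
  have := congrArg (fun z : ℤ => (z : ZMod n)) h
  push_cast at this
  exact this

private lemma zmod_dvd_add (n : ℕ) [NeZero n] (x p : ℤ) :
    ((n : ℤ) ∣ x + p) ↔ ((x : ZMod n) + (p : ZMod n) = 0) := by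
  rw [zmod_dvd]; push_cast; rfl

private lemma zmod_dvd_sub (n : ℕ) [NeZero n] (x p : ℤ) :
    ((n : ℤ) ∣ x - p) ↔ ((x : ZMod n) - (p : ZMod n) = 0) := by
  rw [zmod_dvd]; push_cast; rfl

private lemma eight_dvd_of_zmod (x c : ℤ) (h : (x : ZMod 8) = (c : ZMod 8)) :
    (8:ℤ) ∣ x - c := by
  rw [show ((8:ℤ) ∣ x - c) ↔ (((x - c : ℤ) : ZMod 8) = 0) from by exact_mod_cast zmod_dvd 8 (x - c)]
  push_cast
  rw [h]; ring

private lemma four_dvd_iff (x : ℤ) :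
    (4:ℤ) ∣ x ↔ ((x : ZMod 8) = 0 ∨ (x : ZMod 8) = 4) := by
  constructor
  · rintro ⟨k, rfl⟩
    push_cast
    exact (by decide : ∀ a : ZMod 8, 4 * a = 0 ∨ 4 * a = 4) (k : ZMod 8)
  · rintro (h | h)
    · have := eight_dvd_of_zmod x 0 (by push_cast; exact h)
      omega
    · have := eight_dvd_of_zmod x 4 (by push_cast; exact h)
      omega

private lemma two_dvd_iff (x : ℤ) :
    (2:ℤ) ∣ x ↔ ((x : ZMod 8) = 0 ∨ (x : ZMod 8) = 2 ∨ (x : ZMod 8) = 4 ∨ (x : ZMod 8) = 6) := by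
  constructor
  · rintro ⟨k, rfl⟩
    push_cast
    exact (by decide : ∀ a : ZMod 8, 2 * a = 0 ∨ 2 * a = 2 ∨ 2 * a = 4 ∨ 2 * a = 6) (k : ZMod 8)
  · rintro (h | h | h | h)
    · have := eight_dvd_of_zmod x 0 (by push_cast; exact h); omega
    · have := eight_dvd_of_zmod x 2 (by push_cast; exact h); omega
    · have := eight_dvd_of_zmod x 4 (by push_cast; exact h); omega
    · have := eight_dvd_of_zmod x 6 (by push_cast; exact h); omega

theorem stmt_17 (p q : ℤ) (hp : p ≠ 0) (hq : q ∈ ({1, 2, 3, 4, 5} : Set ℤ))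
    (hgcd : Int.gcd p q = 1) (d : ℚ) (hd : d = (p : ℚ) / (q : ℚ)) :
    (Nat.card {lm : ℤ × ℤ |
        ((lm.1 : ℝ) - (d : ℝ)) ^ 2 + (lm.2 : ℝ) ^ 2 = (d : ℝ) ^ 2} : ℚ)
      = (Nat.card {xy : ℤ × ℤ | xy.1 ^ 2 + xy.2 ^ 2 = p ^ 2} : ℚ) *
          (if q = 1 then 1 else if q = 2 then 1 / 2 else 1 / 4) := by
  have hq5 : q = 1 ∨ q = 2 ∨ q = 3 ∨ q = 4 ∨ q = 5 := by simpa using hq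
  have hqpos : 0 < q := by rcases hq5 with rfl | rfl | rfl | rfl | rfl <;> norm_num
  have hco : IsCoprime p q := Int.isCoprime_iff_gcd_eq_one.mpr hgcd
  have hA := card_trans p q hqpos d hd
  have hqp' : 1 < q → ¬ q ∣ p := by
    intro h1q hdvd
    have h1 := hco.isUnit_of_dvd' hdvd dvd_rfl
    rw [Int.isUnit_iff] at h1
    omega
  rcases hq5 with rfl | rfl | rfl | rfl | rfl
  · -- q = 1
    have hST : {xy : ℤ × ℤ | xy.1 ^ 2 + xy.2 ^ 2 = p ^ 2 ∧ (1:ℤ) ∣ xy.1 + p ∧ (1:ℤ) ∣ xy.2}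
        = {xy : ℤ × ℤ | xy.1 ^ 2 + xy.2 ^ 2 = p ^ 2} := by
      ext ⟨x, y⟩; simp
    rw [hST] at hA
    rw [hA]
    norm_num
  · -- q = 2
    have hqp : ¬ (2:ℤ) ∣ p := hqp' (by norm_num)
    have dq : ∀ z : ℤ, ((2:ℤ) ∣ z) ↔ ((z : ZMod 2) = 0) := fun z => by
      exact_mod_cast zmod_dvd 2 z
    have hpz : (p : ZMod 2) ≠ 0 := fun h => hqp ((dq p).mpr h)
    have h1 : ∀ x y : ℤ, x ^ 2 + y ^ 2 = p ^ 2 → ((2:ℤ) ∣ x ↔ ¬ (2:ℤ) ∣ y) := by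
      intro x y hxy
      rw [dq x, dq y]
      exact (by decide : ∀ a b c : ZMod 2, c ≠ 0 → a ^ 2 + b ^ 2 = c ^ 2 → (a = 0 ↔ ¬ b = 0))
        _ _ _ hpz (zmod_sq 2 x y p hxy)
    rw [hA, card_two p hqp h1]
    push_cast
    ring
  · -- q = 3
    have hqp : ¬ (3:ℤ) ∣ p := hqp' (by norm_num)
    have dq : ∀ z : ℤ, ((3:ℤ) ∣ z) ↔ ((z : ZMod 3) = 0) := fun z => by
      exact_mod_cast zmod_dvd 3 z
    have hpz : (p : ZMod 3) ≠ 0 := fun h => hqp ((dq p).mpr h)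
    have h1 : ∀ x y : ℤ, x ^ 2 + y ^ 2 = p ^ 2 → ((3:ℤ) ∣ x ↔ ¬ (3:ℤ) ∣ y) := by
      intro x y hxy
      rw [dq x, dq y]
      exact (by decide : ∀ a b c : ZMod 3, c ≠ 0 → a ^ 2 + b ^ 2 = c ^ 2 → (a = 0 ↔ ¬ b = 0))
        _ _ _ hpz (zmod_sq 3 x y p hxy)
    have h2 : ∀ x y : ℤ, x ^ 2 + y ^ 2 = p ^ 2 → (3:ℤ) ∣ y →
        (3:ℤ) ∣ x + p ∨ (3:ℤ) ∣ x - p := by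
      intro x y hxy hy
      have hy' : (y : ZMod 3) = 0 := (dq y).mp hy
      rw [dq (x + p), dq (x - p)]
      push_cast
      exact (by decide : ∀ a b c : ZMod 3, c ≠ 0 → a ^ 2 + b ^ 2 = c ^ 2 → b = 0 →
        (a + c = 0 ∨ a - c = 0)) _ _ _ hpz (zmod_sq 3 x y p hxy) hy'
    have h3 : ∀ x : ℤ, (3:ℤ) ∣ x + p → (3:ℤ) ∣ x - p → False := by
      intro x hx1 hx2; omega
    rw [hA, card_four p 3 h1 h2 h3]
    push_cast
    ring
  · -- q = 4
    have hqp : ¬ (4:ℤ) ∣ p := hqp' (by norm_num)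
    have hp2 : ¬ (2:ℤ) ∣ p := by
      intro hdvd
      have h1 := hco.isUnit_of_dvd' hdvd (by norm_num)
      rw [Int.isUnit_iff] at h1
      omega
    have hpodd : ¬ ((p : ZMod 8) = 0 ∨ (p : ZMod 8) = 2 ∨ (p : ZMod 8) = 4 ∨ (p : ZMod 8) = 6) :=
      fun h => hp2 ((two_dvd_iff p).mpr h)
    have h1 : ∀ x y : ℤ, x ^ 2 + y ^ 2 = p ^ 2 → ((4:ℤ) ∣ x ↔ ¬ (4:ℤ) ∣ y) := by
      intro x y hxy
      rw [four_dvd_iff x, four_dvd_iff y]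
      exact (by decide : ∀ a b c : ZMod 8, ¬ (c = 0 ∨ c = 2 ∨ c = 4 ∨ c = 6) →
          a ^ 2 + b ^ 2 = c ^ 2 → ((a = 0 ∨ a = 4) ↔ ¬ (b = 0 ∨ b = 4)))
        _ _ _ hpodd (zmod_sq 8 x y p hxy)
    have h2 : ∀ x y : ℤ, x ^ 2 + y ^ 2 = p ^ 2 → (4:ℤ) ∣ y →
        (4:ℤ) ∣ x + p ∨ (4:ℤ) ∣ x - p := by
      intro x y hxy hy
      rw [four_dvd_iff y] at hy
      rw [four_dvd_iff (x + p), four_dvd_iff (x - p)]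
      push_cast
      exact (by decide : ∀ a b c : ZMod 8, ¬ (c = 0 ∨ c = 2 ∨ c = 4 ∨ c = 6) →
          a ^ 2 + b ^ 2 = c ^ 2 → (b = 0 ∨ b = 4) →
          ((a + c = 0 ∨ a + c = 4) ∨ (a - c = 0 ∨ a - c = 4)))
        _ _ _ hpodd (zmod_sq 8 x y p hxy) hy
    have h3 : ∀ x : ℤ, (4:ℤ) ∣ x + p → (4:ℤ) ∣ x - p → False := by
      intro x hx1 hx2; omega
    rw [hA, card_four p 4 h1 h2 h3]
    push_cast
    ring
  · -- q = 5
    have hqp : ¬ (5:ℤ) ∣ p := hqp' (by norm_num)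
    have dq : ∀ z : ℤ, ((5:ℤ) ∣ z) ↔ ((z : ZMod 5) = 0) := fun z => by
      exact_mod_cast zmod_dvd 5 z
    have hpz : (p : ZMod 5) ≠ 0 := fun h => hqp ((dq p).mpr h)
    have h1 : ∀ x y : ℤ, x ^ 2 + y ^ 2 = p ^ 2 → ((5:ℤ) ∣ x ↔ ¬ (5:ℤ) ∣ y) := by
      intro x y hxy
      rw [dq x, dq y]
      exact (by decide : ∀ a b c : ZMod 5, c ≠ 0 → a ^ 2 + b ^ 2 = c ^ 2 → (a = 0 ↔ ¬ b = 0))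
        _ _ _ hpz (zmod_sq 5 x y p hxy)
    have h2 : ∀ x y : ℤ, x ^ 2 + y ^ 2 = p ^ 2 → (5:ℤ) ∣ y →
        (5:ℤ) ∣ x + p ∨ (5:ℤ) ∣ x - p := by
      intro x y hxy hy
      have hy' : (y : ZMod 5) = 0 := (dq y).mp hy
      rw [dq (x + p), dq (x - p)]
      push_cast
      exact (by decide : ∀ a b c : ZMod 5, c ≠ 0 → a ^ 2 + b ^ 2 = c ^ 2 → b = 0 →
        (a + c = 0 ∨ a - c = 0)) _ _ _ hpz (zmod_sq 5 x y p hxy) hy'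
    have h3 : ∀ x : ℤ, (5:ℤ) ∣ x + p → (5:ℤ) ∣ x - p → False := by
      intro x hx1 hx2; omega
    rw [hA, card_four p 5 h1 h2 h3]
    push_cast
    ring
end
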